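/- (Theorem 2, safety part.) Let x, y, θ, z : ℝ → ℝ be differentiable on [0, ∞) and suppose that at every t ≥ 0 with r(t) ∈ (r_i, r_o), the closed-loop equations hold: ẋ(t) = v·cos θ(t), ẏ(t) = v·sin θ(t), ż(t) = −κ·z(t) + (1/2)·r(t)², θ̇(t) = v/d + v·k₁·Ω(β(t)) + v·k₂·((r(t) − d)/r(t))·η(r(t) − d), where β(t) = −κ·z(t) + (1/2)·r(t)². If r(0) ∈ (r_i, r_o), then r_i < r(t) < r_o for all t ≥ 0. -/

import Mathlib

/-- Range r(t) = √((x(t) − x_T)² + (y(t) − y_T)²). -/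
noncomputable def rng (x y : ℝ → ℝ) (xT yT : ℝ) (t : ℝ) : ℝ :=
  Real.sqrt ((x t - xT) ^ 2 + (y t - yT) ^ 2)

/-- Transformed error ē_x(t) = (x(t) − x_T)·cos θ(t) + (y(t) − y_T)·sin θ(t). -/
noncomputable def ebx (x y θ : ℝ → ℝ) (xT yT : ℝ) (t : ℝ) : ℝ :=
  (x t - xT) * Real.cos (θ t) + (y t - yT) * Real.sin (θ t)

/-- Transformed error ē_y(t) = −(x(t) − x_T)·sin θ(t) + (y(t) − y_T)·cos θ(t) + d. -/
noncomputable def eby (x y θ : ℝ → ℝ) (xT yT d : ℝ) (t : ℝ) : ℝ :=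
  -(x t - xT) * Real.sin (θ t) + (y t - yT) * Real.cos (θ t) + d

/-- The asymmetric barrier Lyapunov function V_r. -/
noncomputable def Vr (δa δb e : ℝ) : ℝ :=
  if 0 < e then (1 / 2) * Real.log (δb ^ 2 / (δb ^ 2 - e ^ 2))
  else (1 / 2) * Real.log (δa ^ 2 / (δa ^ 2 - e ^ 2))

/-- η(e) = 1/(δ_b² − e²) for e > 0 and η(e) = 1/(δ_a² − e²) for e ≤ 0. -/
noncomputable def eta (δa δb e : ℝ) : ℝ :=
  if 0 < e then 1 / (δb ^ 2 - e ^ 2) else 1 / (δa ^ 2 - e ^ 2)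

/-- The estimation signal β(t) = −κ·z(t) + (1/2)·r(t)². -/
noncomputable def beta (x y : ℝ → ℝ) (z : ℝ → ℝ) (κ xT yT : ℝ) (t : ℝ) : ℝ :=
  -κ * z t + (1 / 2) * (rng x y xT yT t) ^ 2

/-!
Along the closed loop, `W = Vr (r - d) + ē_y / k₂` has derivative
`-(ē_x / k₂) (v / d + v k₁ Ω(β))`: the η-term of the steering law cancels the derivative of the
barrier. On any interval `[0, T)` on which `r` stays in `(r_i, r_o)` we have `|ē_x| ≤ r < r_o`,
so `β̇ = -κ β + v ē_x` has bounded forcing and `β` is bounded by Grönwall; hence the derivative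
of `W` is bounded, and since `|ē_y - d| ≤ r`, so is `Vr (r - d)`. A bounded barrier
keeps `r` in a closed subinterval of `(r_i, r_o)`, so `r` cannot reach the boundary at a first
exit time.
-/

open Set Real

theorem norm_le_gronwallBound_of_hasDerivAt_Ico {E : Type*} [NormedAddCommGroup E]
    [NormedSpace ℝ E] {f f' : ℝ → E} {K ε a b : ℝ} (hK : 0 ≤ K) (hε : 0 ≤ ε)
    (hf : ∀ t ∈ Ico a b, HasDerivAt f (f' t) t)
    (bound : ∀ t ∈ Ico a b, ‖f' t‖ ≤ K * ‖f t‖ + ε) :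
    ∀ t ∈ Ico a b, ‖f t‖ ≤ gronwallBound ‖f a‖ K ε (b - a) := by
  intro t ht
  have hsub : Icc a t ⊆ Ico a b := Icc_subset_Ico_right ht.2
  calc ‖f t‖ ≤ gronwallBound ‖f a‖ K ε (t - a) :=
        norm_le_gronwallBound_of_norm_deriv_right_le
          (fun s hs => (hf s (hsub hs)).continuousAt.continuousWithinAt)
          (fun s hs => (hf s (hsub (Ico_subset_Icc_self hs))).hasDerivWithinAt) le_rfl
          (fun s hs => bound s (hsub (Ico_subset_Icc_self hs))) t ⟨ht.1, le_rfl⟩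
    _ ≤ gronwallBound ‖f a‖ K ε (b - a) :=
        gronwallBound_mono (norm_nonneg _) hε hK (by linarith [ht.2])

theorem norm_le_of_hasDerivAt_Ico_of_norm_deriv_le {E : Type*} [NormedAddCommGroup E]
    [NormedSpace ℝ E] {f f' : ℝ → E} {C a b : ℝ}
    (hf : ∀ t ∈ Ico a b, HasDerivAt f (f' t) t) (bound : ∀ t ∈ Ico a b, ‖f' t‖ ≤ C) :
    ∀ t ∈ Ico a b, ‖f t‖ ≤ ‖f a‖ + C * (b - a) := by
  intro t ht
  have hC : 0 ≤ C := (norm_nonneg _).trans (bound t ht)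
  simpa [gronwallBound_K0] using
    norm_le_gronwallBound_of_hasDerivAt_Ico le_rfl hC hf (by simpa using bound) t ht

theorem forall_mem_of_mem_isClosed_subset {X : Type*} [TopologicalSpace X] {f : ℝ → X}
    {U : Set X} {a : ℝ} (hf : ContinuousOn f (Ici a)) (hU : IsOpen U) (ha : f a ∈ U)
    (htrap : ∀ T > a, (∀ t ∈ Ico a T, f t ∈ U) →
      ∃ K, IsClosed K ∧ K ⊆ U ∧ ∀ t ∈ Ico a T, f t ∈ K) :
    ∀ t ≥ a, f t ∈ U := by
  by_contra! hexit
  set B := {t ∈ Ici a | f t ∉ U}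
  have hBne : B.Nonempty := hexit
  have hBbdd : BddBelow B := ⟨a, fun t ht => ht.1⟩
  set T := sInf B
  have hTB : T ∈ B :=
    (hf.preimage_isClosed_of_isClosed isClosed_Ici hU.isClosed_compl).csInf_mem hBne hBbdd
  have haT : a < T := lt_of_le_of_ne hTB.1 fun h => hTB.2 (h ▸ ha)
  have hbefore : ∀ t ∈ Ico a T, f t ∈ U := fun t ht => by
    by_contra hft
    exact (csInf_le hBbdd ⟨ht.1, hft⟩).not_gt ht.2
  obtain ⟨K, hK, hKU, hfK⟩ := htrap T haT hbefore
  have hfT : f T ∈ closure K :=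
    ((hf T hTB.1).mono Ico_subset_Ici_self).mem_closure
      (by rw [closure_Ico haT.ne]; exact right_mem_Icc.2 haT.le) hfK
  exact hTB.2 (hKU (hK.closure_eq ▸ hfT))

theorem abs_mul_cos_add_mul_sin_le (a b θ : ℝ) :
    |a * cos θ + b * sin θ| ≤ √(a ^ 2 + b ^ 2) :=
  Real.abs_le_sqrt (by nlinarith [sin_sq_add_cos_sq θ, sq_nonneg (a * sin θ - b * cos θ)])

noncomputable def logBarrier (δ e : ℝ) : ℝ := 1 / 2 * Real.log (δ ^ 2 / (δ ^ 2 - e ^ 2))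

theorem Vr_eq_ite (δa δb : ℝ) :
    Vr δa δb = fun e => if 0 < e then logBarrier δb e else logBarrier δa e := rfl

theorem logBarrier_zero (δ : ℝ) : logBarrier δ 0 = 0 := by
  by_cases hδ : δ = 0 <;> simp [logBarrier, hδ]

theorem hasDerivAt_logBarrier {δ e : ℝ} (he : e ^ 2 < δ ^ 2) :
    HasDerivAt (logBarrier δ) (e / (δ ^ 2 - e ^ 2)) e := by
  have hgap : δ ^ 2 - e ^ 2 ≠ 0 := (sub_pos.2 he).ne'
  have hδ : δ ≠ 0 := by rintro rfl; nlinarith [sq_nonneg e]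
  have hquot : HasDerivAt (fun s => δ ^ 2 / (δ ^ 2 - s ^ 2)) _ e :=
    (hasDerivAt_const e (δ ^ 2)).div ((hasDerivAt_pow 2 e).const_sub (δ ^ 2)) hgap
  refine ((hquot.log (div_ne_zero (pow_ne_zero 2 hδ) hgap)).const_mul (1 / 2)).congr_deriv ?_
  field_simp
  ring

theorem hasDerivAt_Vr {δa δb e : ℝ} (ha : 0 < δa) (hb : 0 < δb) (he : e ∈ Ioo (-δa) δb) :
    HasDerivAt (Vr δa δb) (e * eta δa δb e) e := by
  rcases lt_trichotomy e 0 with hneg | rfl | hpos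
  · have hsq : e ^ 2 < δa ^ 2 := by nlinarith [he.1]
    have heq : logBarrier δa =ᶠ[nhds e] Vr δa δb := by
      filter_upwards [Iio_mem_nhds hneg] with s hs
      simp only [Vr_eq_ite, if_neg (not_lt.2 (le_of_lt (mem_Iio.1 hs)))]
    rw [eta, if_neg hneg.not_gt, mul_one_div]
    exact (hasDerivAt_logBarrier hsq).congr_of_eventuallyEq heq.symm
  · have hleft : HasDerivWithinAt (logBarrier δa) 0 (Iic 0) 0 := by
      simpa using (hasDerivAt_logBarrier (e := 0) (by simpa using pow_pos ha 2)).hasDerivWithinAt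
    have hright : HasDerivWithinAt (logBarrier δb) 0 (Ici 0) 0 := by
      simpa using (hasDerivAt_logBarrier (e := 0) (by simpa using pow_pos hb 2)).hasDerivWithinAt
    have hleft' : HasDerivWithinAt (Vr δa δb) 0 (Iic 0) 0 :=
      hleft.congr (fun s hs => by simp only [Vr_eq_ite, if_neg (not_lt.2 (mem_Iic.1 hs))])
        (by simp only [Vr_eq_ite, lt_irrefl, if_false])
    have hright' : HasDerivWithinAt (Vr δa δb) 0 (Ici 0) 0 := by
      refine hright.congr (fun s hs => ?_) (by simp [Vr_eq_ite, logBarrier_zero])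
      rcases (mem_Ici.1 hs).eq_or_lt with hs0 | hs0
      · simp [Vr_eq_ite, ← hs0, logBarrier_zero]
      · simp only [Vr_eq_ite, if_pos hs0]
    have := hleft'.union hright'
    rw [Iic_union_Ici, hasDerivWithinAt_univ] at this
    rwa [zero_mul]
  · have hsq : e ^ 2 < δb ^ 2 := by nlinarith [he.2]
    have heq : logBarrier δb =ᶠ[nhds e] Vr δa δb := by
      filter_upwards [Ioi_mem_nhds hpos] with s hs
      simp only [Vr_eq_ite, if_pos (mem_Ioi.1 hs)]
    rw [eta, if_pos hpos, mul_one_div]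
    exact (hasDerivAt_logBarrier hsq).congr_of_eventuallyEq heq.symm

theorem sq_le_of_logBarrier_le {δ e M : ℝ} (he : e ^ 2 < δ ^ 2) (h : logBarrier δ e ≤ M) :
    e ^ 2 ≤ (1 - exp (-(2 * M))) * δ ^ 2 := by
  have hgap : 0 < δ ^ 2 - e ^ 2 := sub_pos.2 he
  have hquot : δ ^ 2 / (δ ^ 2 - e ^ 2) ≤ exp (2 * M) := by
    rw [← Real.log_le_iff_le_exp (div_pos (lt_of_le_of_lt (sq_nonneg e) he) hgap)]
    unfold logBarrier at h
    linarith
  rw [div_le_iff₀ hgap] at hquot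
  have hexp : exp (-(2 * M)) * exp (2 * M) = 1 := by rw [← exp_add]; simp
  nlinarith [exp_pos (-(2 * M))]

theorem exists_Vr_sublevel_subset {δa δb : ℝ} (ha : 0 < δa) (hb : 0 < δb) (M : ℝ) :
    ∃ c < 1, ∀ e ∈ Ioo (-δa) δb, Vr δa δb e ≤ M → -(c * δa) ≤ e ∧ e ≤ c * δb := by
  set c := √(1 - exp (-(2 * M)))
  have hc : c < 1 := by
    rw [Real.sqrt_lt' one_pos]
    linarith [exp_pos (-(2 * M))]
  have habs : ∀ δ e, 0 < δ → e ^ 2 < δ ^ 2 → logBarrier δ e ≤ M → |e| ≤ c * δ := by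
    intro δ e hδ he h
    rw [← abs_of_pos hδ, ← Real.sqrt_sq_eq_abs δ, ← Real.sqrt_mul' _ (sq_nonneg δ)]
    exact Real.abs_le_sqrt (sq_le_of_logBarrier_le he h)
  refine ⟨c, hc, fun e he hV => ?_⟩
  by_cases hpos : 0 < e
  · have : |e| ≤ c * δb := habs δb e hb (by nlinarith [he.2]) (by simpa [Vr_eq_ite, hpos] using hV)
    exact ⟨by nlinarith [Real.sqrt_nonneg (1 - exp (-(2 * M)))], (abs_le.1 this).2⟩
  · have : |e| ≤ c * δa := habs δa e ha (by nlinarith [he.1]) (by simpa [Vr_eq_ite, hpos] using hV)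
    exact ⟨(abs_le.1 this).1, by nlinarith [Real.sqrt_nonneg (1 - exp (-(2 * M)))]⟩

section UnicycleKinematics

variable {x y θ z : ℝ → ℝ} {xT yT : ℝ}

theorem rng_sq (t : ℝ) : rng x y xT yT t ^ 2 = (x t - xT) ^ 2 + (y t - yT) ^ 2 :=
  Real.sq_sqrt (by positivity)

theorem abs_ebx_le_rng (t : ℝ) : |ebx x y θ xT yT t| ≤ rng x y xT yT t :=
  abs_mul_cos_add_mul_sin_le _ _ _

theorem abs_eby_sub_le_rng (d t : ℝ) : |eby x y θ xT yT d t - d| ≤ rng x y xT yT t := by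
  have := abs_mul_cos_add_mul_sin_le (y t - yT) (-(x t - xT)) (θ t)
  rw [neg_sq, add_comm (_ ^ 2)] at this
  have hrot : eby x y θ xT yT d t - d = (y t - yT) * cos (θ t) + -(x t - xT) * sin (θ t) := by
    simp only [eby]
    ring
  exact hrot ▸ this

variable {v t : ℝ}

theorem hasDerivAt_rng_sq (hx : HasDerivAt x (v * cos (θ t)) t)
    (hy : HasDerivAt y (v * sin (θ t)) t) :
    HasDerivAt (fun s => rng x y xT yT s ^ 2) (2 * v * ebx x y θ xT yT t) t := by
  simp only [rng_sq]
  exact (((hx.sub_const xT).pow 2).add ((hy.sub_const yT).pow 2)).congr_deriv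
    (by simp only [ebx]; ring)

theorem hasDerivAt_rng (hx : HasDerivAt x (v * cos (θ t)) t)
    (hy : HasDerivAt y (v * sin (θ t)) t) (hr : rng x y xT yT t ≠ 0) :
    HasDerivAt (rng x y xT yT) (v * ebx x y θ xT yT t / rng x y xT yT t) t := by
  have hsqrt_sq (s : ℝ) : √(rng x y xT yT s ^ 2) = rng x y xT yT s :=
    Real.sqrt_sq (Real.sqrt_nonneg _)
  have hsqrt := (hasDerivAt_rng_sq hx hy).sqrt (pow_ne_zero 2 hr)
  simp only [hsqrt_sq] at hsqrt
  refine hsqrt.congr_deriv ?_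
  field_simp

theorem hasDerivAt_beta {κ : ℝ} (hx : HasDerivAt x (v * cos (θ t)) t)
    (hy : HasDerivAt y (v * sin (θ t)) t)
    (hz : HasDerivAt z (-κ * z t + 1 / 2 * rng x y xT yT t ^ 2) t) :
    HasDerivAt (beta x y z κ xT yT)
      (-κ * beta x y z κ xT yT t + v * ebx x y θ xT yT t) t :=
  ((hz.const_mul (-κ)).add ((hasDerivAt_rng_sq hx hy).const_mul (1 / 2))).congr_deriv
    (by simp only [beta]; ring)

theorem norm_beta_le_of_rng_le {κ a b ro : ℝ} (hro : 0 ≤ ro)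
    (hx : ∀ t ∈ Ico a b, HasDerivAt x (v * cos (θ t)) t)
    (hy : ∀ t ∈ Ico a b, HasDerivAt y (v * sin (θ t)) t)
    (hz : ∀ t ∈ Ico a b, HasDerivAt z (-κ * z t + 1 / 2 * rng x y xT yT t ^ 2) t)
    (hr : ∀ t ∈ Ico a b, rng x y xT yT t ≤ ro) :
    ∀ t ∈ Ico a b, ‖beta x y z κ xT yT t‖ ≤
      gronwallBound ‖beta x y z κ xT yT a‖ |κ| (|v| * ro) (b - a) := by
  refine norm_le_gronwallBound_of_hasDerivAt_Ico (abs_nonneg κ) (by positivity)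
    (fun t ht => hasDerivAt_beta (hx t ht) (hy t ht) (hz t ht)) (fun t ht => ?_)
  calc ‖-κ * beta x y z κ xT yT t + v * ebx x y θ xT yT t‖
      ≤ |κ| * ‖beta x y z κ xT yT t‖ + |v| * |ebx x y θ xT yT t| := by
        simpa [abs_mul] using norm_add_le (-κ * beta x y z κ xT yT t) (v * ebx x y θ xT yT t)
    _ ≤ |κ| * ‖beta x y z κ xT yT t‖ + |v| * ro := by
        gcongr
        exact (abs_ebx_le_rng t).trans (hr t ht)

theorem hasDerivAt_eby {d ω : ℝ} (hx : HasDerivAt x (v * cos (θ t)) t)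
    (hy : HasDerivAt y (v * sin (θ t)) t) (hθ : HasDerivAt θ ω t) :
    HasDerivAt (eby x y θ xT yT d) (-(ebx x y θ xT yT t * ω)) t :=
  ((((hx.sub_const xT).neg.mul hθ.sin).add ((hy.sub_const yT).mul hθ.cos)).add_const d).congr_deriv
    (by simp only [ebx, Pi.neg_apply]; ring)

end UnicycleKinematics

noncomputable def rangeLyapunov (x y θ : ℝ → ℝ) (xT yT d ri ro k2 : ℝ) (t : ℝ) : ℝ :=
  Vr (d - ri) (ro - d) (rng x y xT yT t - d) + eby x y θ xT yT d t / k2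

section RangeLyapunov

variable {x y θ : ℝ → ℝ} {xT yT d ri ro k2 : ℝ}

theorem Vr_le_rangeLyapunov_add (hk2 : 0 < k2) (t : ℝ) :
    Vr (d - ri) (ro - d) (rng x y xT yT t - d) ≤
      rangeLyapunov x y θ xT yT d ri ro k2 t + (rng x y xT yT t - d) / k2 := by
  have heby : -rng x y xT yT t ≤ eby x y θ xT yT d t - d :=
    neg_le_of_abs_le (abs_eby_sub_le_rng d t)
  have : -(eby x y θ xT yT d t / k2) ≤ (rng x y xT yT t - d) / k2 := by
    rw [← neg_div]
    exact div_le_div_of_nonneg_right (by linarith) hk2.le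
  unfold rangeLyapunov
  linarith

theorem hasDerivAt_rangeLyapunov {v u t : ℝ} (hri : 0 < ri) (hrid : ri < d) (hdro : d < ro)
    (hk2 : k2 ≠ 0) (hr : rng x y xT yT t ∈ Ioo ri ro)
    (hx : HasDerivAt x (v * cos (θ t)) t) (hy : HasDerivAt y (v * sin (θ t)) t)
    (hθ : HasDerivAt θ (u + v * k2 * ((rng x y xT yT t - d) / rng x y xT yT t) *
      eta (d - ri) (ro - d) (rng x y xT yT t - d)) t) :
    HasDerivAt (rangeLyapunov x y θ xT yT d ri ro k2) (-(ebx x y θ xT yT t * u / k2)) t := by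
  have hr0 : rng x y xT yT t ≠ 0 := (hri.trans hr.1).ne'
  have hVr := (hasDerivAt_Vr (sub_pos.2 hrid) (sub_pos.2 hdro)
    ⟨by linarith [hr.1], by linarith [hr.2]⟩).comp t ((hasDerivAt_rng hx hy hr0).sub_const d)
  refine (hVr.add ((hasDerivAt_eby hx hy hθ).div_const k2)).congr_deriv ?_
  field_simp
  ring

end RangeLyapunov

theorem rng_mem_isClosed_subset_of_closedLoop {x y θ z Ω : ℝ → ℝ}
    {v d k1 k2 κ ri ro xT yT : ℝ} (hΩcont : Continuous Ω)
    (hri : 0 < ri) (hrid : ri < d) (hdro : d < ro) (hk2 : 0 < k2)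
    (hclosedloop : ∀ t ≥ (0 : ℝ), rng x y xT yT t ∈ Ioo ri ro →
      HasDerivAt x (v * cos (θ t)) t ∧
      HasDerivAt y (v * sin (θ t)) t ∧
      HasDerivAt z (-κ * z t + (1 / 2) * (rng x y xT yT t) ^ 2) t ∧
      HasDerivAt θ (v / d + v * k1 * Ω (beta x y z κ xT yT t) +
        v * k2 * ((rng x y xT yT t - d) / rng x y xT yT t) *
          eta (d - ri) (ro - d) (rng x y xT yT t - d)) t)
    {T : ℝ} (hin : ∀ t ∈ Ico 0 T, rng x y xT yT t ∈ Ioo ri ro) :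
    ∃ K, IsClosed K ∧ K ⊆ Ioo ri ro ∧ ∀ t ∈ Ico 0 T, rng x y xT yT t ∈ K := by
  have hloop := fun t (ht : t ∈ Ico 0 T) => hclosedloop t ht.1 (hin t ht)
  set B := gronwallBound ‖beta x y z κ xT yT 0‖ |κ| (|v| * ro) (T - 0)
  have hβ : ∀ t ∈ Ico 0 T, ‖beta x y z κ xT yT t‖ ≤ B :=
    norm_beta_le_of_rng_le (by linarith) (fun t ht => (hloop t ht).1) (fun t ht => (hloop t ht).2.1)
      (fun t ht => (hloop t ht).2.2.1) (fun t ht => (hin t ht).2.le)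
  obtain ⟨MΩ, hMΩ⟩ := (isCompact_Icc (a := -B) (b := B)).exists_bound_of_continuousOn
    (f := fun s => v / d + v * k1 * Ω s) (by fun_prop)
  set W := rangeLyapunov x y θ xT yT d ri ro k2
  have hW : ∀ t ∈ Ico 0 T, ‖W t‖ ≤ ‖W 0‖ + ro * MΩ / k2 * (T - 0) := by
    refine norm_le_of_hasDerivAt_Ico_of_norm_deriv_le (fun t ht => hasDerivAt_rangeLyapunov
      hri hrid hdro hk2.ne' (hin t ht) (hloop t ht).1 (hloop t ht).2.1 (hloop t ht).2.2.2)
      (fun t ht => ?_)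
    have hebx := (abs_ebx_le_rng (θ := θ) t).trans (hin t ht).2.le
    rw [norm_neg, norm_div, norm_mul, Real.norm_of_nonneg hk2.le]
    gcongr
    exacts [(abs_nonneg _).trans hebx, hebx, hMΩ _ (abs_le.1 (hβ t ht))]
  set M := ‖W 0‖ + ro * MΩ / k2 * (T - 0) + (ro - d) / k2
  have hVr : ∀ t ∈ Ico 0 T, Vr (d - ri) (ro - d) (rng x y xT yT t - d) ≤ M := fun t ht =>
    calc Vr (d - ri) (ro - d) (rng x y xT yT t - d)
        ≤ W t + (rng x y xT yT t - d) / k2 := Vr_le_rangeLyapunov_add hk2 t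
      _ ≤ M := add_le_add ((Real.le_norm_self _).trans (hW t ht))
          (by gcongr; exact (hin t ht).2.le)
  obtain ⟨c, hc1, hc⟩ := exists_Vr_sublevel_subset (sub_pos.2 hrid) (sub_pos.2 hdro) M
  refine ⟨Icc (d - c * (d - ri)) (d + c * (ro - d)), isClosed_Icc,
    Icc_subset_Ioo (by nlinarith) (by nlinarith), fun t ht => ?_⟩
  have hr := hin t ht
  obtain ⟨hlo, hhi⟩ := hc _ ⟨by linarith [hr.1], by linarith [hr.2]⟩ (hVr t ht)
  exact ⟨by linarith, by linarith⟩

theorem theorem2_safety_general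
    (x y θ z : ℝ → ℝ) (Ω : ℝ → ℝ) (v d k1 k2 κ ri ro xT yT : ℝ)
    (hΩcont : Continuous Ω)
    (hri : 0 < ri) (hrid : ri < d) (hdro : d < ro)
    (hk2 : 0 < k2)
    (hxdiff : ∀ t ≥ (0 : ℝ), DifferentiableAt ℝ x t)
    (hydiff : ∀ t ≥ (0 : ℝ), DifferentiableAt ℝ y t)
    (hclosedloop : ∀ t ≥ (0 : ℝ), rng x y xT yT t ∈ Set.Ioo ri ro →
      HasDerivAt x (v * Real.cos (θ t)) t ∧
      HasDerivAt y (v * Real.sin (θ t)) t ∧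
      HasDerivAt z (-κ * z t + (1 / 2) * (rng x y xT yT t) ^ 2) t ∧
      HasDerivAt θ (v / d + v * k1 * Ω (beta x y z κ xT yT t) +
        v * k2 * ((rng x y xT yT t - d) / rng x y xT yT t) *
          eta (d - ri) (ro - d) (rng x y xT yT t - d)) t)
    (hr0 : rng x y xT yT 0 ∈ Set.Ioo ri ro) :
    ∀ t ≥ (0 : ℝ), ri < rng x y xT yT t ∧ rng x y xT yT t < ro := by
  have hrcont : ContinuousOn (rng x y xT yT) (Ici 0) := fun t ht =>
    (((hxdiff t ht).continuousAt.sub continuousAt_const).pow 2 |>.add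
      (((hydiff t ht).continuousAt.sub continuousAt_const).pow 2)).sqrt.continuousWithinAt
  exact forall_mem_of_mem_isClosed_subset hrcont isOpen_Ioo hr0 fun _ _ hin =>
    rng_mem_isClosed_subset_of_closedLoop hΩcont hri hrid hdro hk2 hclosedloop hin

/-- Theorem 2, safety part: Under the closed-loop dynamics with the
range-only dynamic output feedback controller, if r(0) ∈ (r_i, r_o), then
r_i < r(t) < r_o for all t ≥ 0. -/
theorem theorem2_safety
    (x y θ z : ℝ → ℝ) (Ω α₁ α₂ : ℝ → ℝ) (v d k1 k2 κ ri ro xT yT : ℝ)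
    (hΩcont : Continuous Ω) (hΩ0 : Ω 0 = 0) (hΩpos : ∀ s : ℝ, s ≠ 0 → 0 < s * Ω s)
    (hα₁mono : StrictMonoOn α₁ (Set.Ici 0)) (hα₁cont : ContinuousOn α₁ (Set.Ici 0))
    (hα₁0 : α₁ 0 = 0) (hα₁top : Filter.Tendsto α₁ Filter.atTop Filter.atTop)
    (hα₂mono : StrictMonoOn α₂ (Set.Ici 0)) (hα₂cont : ContinuousOn α₂ (Set.Ici 0))
    (hα₂0 : α₂ 0 = 0) (hα₂top : Filter.Tendsto α₂ Filter.atTop Filter.atTop)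
    (hΩbounds : ∀ s : ℝ, α₁ |s| ≤ (∫ τ in (0 : ℝ)..s, Ω τ) ∧
      (∫ τ in (0 : ℝ)..s, Ω τ) ≤ α₂ |s|)
    (hv : v ≠ 0) (hri : 0 < ri) (hrid : ri < d) (hdro : d < ro)
    (hk1 : 0 < k1) (hk2 : 0 < k2) (hκ : 0 < κ)
    (hxdiff : ∀ t ≥ (0 : ℝ), DifferentiableAt ℝ x t)
    (hydiff : ∀ t ≥ (0 : ℝ), DifferentiableAt ℝ y t)
    (hθdiff : ∀ t ≥ (0 : ℝ), DifferentiableAt ℝ θ t)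
    (hzdiff : ∀ t ≥ (0 : ℝ), DifferentiableAt ℝ z t)
    (hclosedloop : ∀ t ≥ (0 : ℝ), rng x y xT yT t ∈ Set.Ioo ri ro →
      HasDerivAt x (v * Real.cos (θ t)) t ∧
      HasDerivAt y (v * Real.sin (θ t)) t ∧
      HasDerivAt z (-κ * z t + (1 / 2) * (rng x y xT yT t) ^ 2) t ∧
      HasDerivAt θ (v / d + v * k1 * Ω (beta x y z κ xT yT t) +
        v * k2 * ((rng x y xT yT t - d) / rng x y xT yT t) *
          eta (d - ri) (ro - d) (rng x y xT yT t - d)) t)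
    (hr0 : rng x y xT yT 0 ∈ Set.Ioo ri ro) :
    ∀ t ≥ (0 : ℝ), ri < rng x y xT yT t ∧ rng x y xT yT t < ro :=
  theorem2_safety_general x y θ z Ω v d k1 k2 κ ri ro xT yT hΩcont hri hrid hdro hk2 hxdiff hydiff
    hclosedloop hr0
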